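/- Let b ∈ ℝ^d and let μ, ν be Borel probability measures on ℝ^d with finite second moments and common barycentre [μ] = [ν] = b. Then μ ≼_c ν if and only if 𝒞(μ,ν) = m₂(ν). Moreover, if μ ≼_c ν, then ν is the unique minimizer of the problem defining 𝒞(μ,ν): every Borel probability measure ρ with finite second moment, ρ ≽_c μ, ρ ≽_c ν and m₂(ρ) = 𝒞(μ,ν) equals ν. -/

import Mathlib

open MeasureTheory Filter Topology
open scoped ENNReal RealInnerProductSpace Classical

noncomputable section

/-- Second moment `m₂(μ) = ∫ ‖x‖² dμ`. -/
def m2 {d : ℕ} (μ : Measure (EuclideanSpace ℝ (Fin d))) : ℝ := ∫ x, ‖x‖ ^ 2 ∂μ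

/-- Barycentre `[μ] = ∫ x dμ`. -/
def bary {d : ℕ} (μ : Measure (EuclideanSpace ℝ (Fin d))) : EuclideanSpace ℝ (Fin d) :=
  ∫ x, x ∂μ

/-- `ConvexOrderLE μ ν` means `μ ≼_c ν`, i.e. `ν` dominates `μ` in the convex order:
`∫ φ dμ ≤ ∫ φ dν` for every convex `φ : ℝ^d → ℝ` integrable with respect to both. -/
def ConvexOrderLE {d : ℕ} (μ ν : Measure (EuclideanSpace ℝ (Fin d))) : Prop :=
  ∀ φ : EuclideanSpace ℝ (Fin d) → ℝ, ConvexOn ℝ Set.univ φ →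
    Integrable φ μ → Integrable φ ν → ∫ x, φ x ∂μ ≤ ∫ x, φ x ∂ν

/-- Admissible potentials for the Zolotarev-2 problem: differentiable functions whose
gradient is Lipschitz with constant `1`. -/
def ZolAdmissible {d : ℕ} (u : EuclideanSpace ℝ (Fin d) → ℝ) : Prop :=
  Differentiable ℝ u ∧ LipschitzWith 1 (fun x => gradient u x)

/-- The Zolotarev-2 distance. -/
def Z2 {d : ℕ} (μ ν : Measure (EuclideanSpace ℝ (Fin d))) : ℝ :=
  sSup {r : ℝ | ∃ u : EuclideanSpace ℝ (Fin d) → ℝ, ZolAdmissible u ∧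
    r = (∫ x, u x ∂μ) - ∫ x, u x ∂ν}

/-- `𝒞(μ,ν)`: the least second moment of a common convex dominant of `μ` and `ν`. -/
def Cmin {d : ℕ} (μ ν : Measure (EuclideanSpace ℝ (Fin d))) : ℝ :=
  sInf {r : ℝ | ∃ ρ : Measure (EuclideanSpace ℝ (Fin d)), IsProbabilityMeasure ρ ∧
    Integrable (fun x => ‖x‖ ^ 2) ρ ∧ ConvexOrderLE μ ρ ∧ ConvexOrderLE ν ρ ∧ r = m2 ρ}

/-- Bounded Borel vector field. -/
def BoundedBorel {d : ℕ} (Φ : EuclideanSpace ℝ (Fin d) → EuclideanSpace ℝ (Fin d)) : Prop :=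
  Measurable Φ ∧ ∃ C : ℝ, ∀ x, ‖Φ x‖ ≤ C

/-- A bi-martingale pair `(γ, ζ)` for `(μ, ν)`. -/
def IsBiMartingalePair {d : ℕ} (μ ν : Measure (EuclideanSpace ℝ (Fin d)))
    (γ : Measure (EuclideanSpace ℝ (Fin d) × EuclideanSpace ℝ (Fin d)))
    (ζ : EuclideanSpace ℝ (Fin d) × EuclideanSpace ℝ (Fin d) → EuclideanSpace ℝ (Fin d)) :
    Prop :=
  IsProbabilityMeasure γ ∧ γ.map Prod.fst = μ ∧ γ.map Prod.snd = ν ∧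
  Measurable ζ ∧ Integrable ζ γ ∧
  (∀ Φ, BoundedBorel Φ → ∫ p, ⟪Φ p.1, ζ p - p.1⟫ ∂γ = 0) ∧
  (∀ Ψ, BoundedBorel Ψ → ∫ p, ⟪Ψ p.2, ζ p - p.2⟫ ∂γ = 0)

/-- A martingale plan from `μ` to `ν`. -/
def IsMartingalePlan {d : ℕ} (μ ν : Measure (EuclideanSpace ℝ (Fin d)))
    (γ : Measure (EuclideanSpace ℝ (Fin d) × EuclideanSpace ℝ (Fin d))) : Prop :=
  IsProbabilityMeasure γ ∧ γ.map Prod.fst = μ ∧ γ.map Prod.snd = ν ∧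
  ∀ Φ, BoundedBorel Φ → ∫ p, ⟪Φ p.1, p.2 - p.1⟫ ∂γ = 0

/-- Convexity for `ℝ ∪ {+∞}`-valued functions (modelled in `EReal`). -/
def EConvexOn {d : ℕ} (f : EuclideanSpace ℝ (Fin d) → EReal) : Prop :=
  ∀ x y : EuclideanSpace ℝ (Fin d), ∀ t : ℝ, 0 ≤ t → t ≤ 1 →
    f (t • x + (1 - t) • y) ≤ (t : EReal) * f x + ((1 - t : ℝ) : EReal) * f y

/-- Strict convexity for `ℝ ∪ {+∞}`-valued functions. -/
def EStrictConvexOn {d : ℕ} (f : EuclideanSpace ℝ (Fin d) → EReal) : Prop :=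
  ∀ x y : EuclideanSpace ℝ (Fin d), x ≠ y → ∀ t : ℝ, 0 < t → t < 1 →
    f x ≠ ⊤ → f y ≠ ⊤ →
    f (t • x + (1 - t) • y) < (t : EReal) * f x + ((1 - t : ℝ) : EReal) * f y

/-- Superlinearity `f(z)/‖z‖ → +∞` for `EReal`-valued functions. -/
def ESuperlinear {d : ℕ} (f : EuclideanSpace ℝ (Fin d) → EReal) : Prop :=
  ∀ M : ℝ, ∃ R : ℝ, ∀ z, R ≤ ‖z‖ → ((M * ‖z‖ : ℝ) : EReal) ≤ f z

/-- Superlinearity `h(z)/‖z‖ → +∞` for real-valued functions. -/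
def SuperlinearReal {d : ℕ} (h : EuclideanSpace ℝ (Fin d) → ℝ) : Prop :=
  ∀ M : ℝ, ∃ R : ℝ, ∀ z, R ≤ ‖z‖ → M * ‖z‖ ≤ h z

/-- Integral of an `ℝ ∪ {+∞}`-valued function, with value `+∞` when the function fails to
be (almost everywhere finite and) integrable. -/
def eintegral {α : Type*} [MeasurableSpace α] (ρ : Measure α) (f : α → EReal) : EReal :=
  if Integrable (fun x => (f x).toReal) ρ ∧ ∀ᵐ x ∂ρ, f x ≠ ⊤ then
    ((∫ x, (f x).toReal ∂ρ : ℝ) : EReal)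
  else ⊤

/-- The coupling map `ζ̄` associated with a Zolotarev potential `u`. -/
def zetaBar {d : ℕ} (u : EuclideanSpace ℝ (Fin d) → ℝ)
    (p : EuclideanSpace ℝ (Fin d) × EuclideanSpace ℝ (Fin d)) : EuclideanSpace ℝ (Fin d) :=
  (1 / 2 : ℝ) • (p.1 + p.2) + (1 / 2 : ℝ) • (gradient u p.1 - gradient u p.2)

/-
If `μ ≼_c ν`, then `ν` is itself a common dominant and `‖x‖²` is convex, so `𝒞(μ,ν) = m₂(ν)`.

Conversely, for an `L`-Lipschitz `g` the Moreau envelope `g_t = inf_y (g y + t/2 ‖· - y‖²)`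
satisfies `g - L²/(2t) ≤ g_t ≤ g`, and `t/2 ‖x‖² - g_t` is convex. Testing `ν ≼_c ρ` against
the latter gives `∫ g dρ ≤ ∫ g dν + t/2 (m₂(ρ) - m₂(ν)) + L²/(2t)`. Common dominants `ρ` exist
(the law of `X + Y - b` for independent `X ∼ μ`, `Y ∼ ν`), so if `𝒞(μ,ν) = m₂(ν)` we may take
`m₂(ρ) - m₂(ν)` arbitrarily small, then `t` large, and get `∫ g dμ ≤ ∫ g dρ` and hence
`∫ g dμ ≤ ∫ g dν` for every convex Lipschitz `g`; a general convex function is an increasing limit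
of such.
For a minimiser `ρ`, the same bound gives `∫ g dρ = ∫ g dν` for all convex Lipschitz `g`, and
these integrals determine the measure.
-/

open scoped NNReal

section FirstMoment

variable {F : Type*} [NormedAddCommGroup F] [MeasurableSpace F] [OpensMeasurableSpace F]
  {μ : Measure F} [IsFiniteMeasure μ]

lemma integrable_norm_of_integrable_norm_sq (h : Integrable (fun x : F => ‖x‖ ^ 2) μ) :
    Integrable (‖·‖) μ :=
  ((memLp_two_iff_integrable_sq_norm continuous_norm.aestronglyMeasurable).2
    (by simpa only [norm_norm] using h)).integrable one_le_two

lemma LipschitzWith.integrable_of_integrable_norm {g : F → ℝ} {K : ℝ≥0} (hg : LipschitzWith K g)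
    (hμ : Integrable (‖·‖) μ) : Integrable g μ := by
  refine ((hμ.const_mul K).add (integrable_const ‖g 0‖)).mono'
    hg.continuous.aestronglyMeasurable (ae_of_all _ fun x => ?_)
  have := hg.norm_sub_le x 0
  rw [sub_zero] at this
  simp only [Pi.add_apply]
  linarith [norm_sub_norm_le (g x) (g 0)]

end FirstMoment

section MoreauEnvelope

variable {F : Type*} [NormedAddCommGroup F] {g : F → ℝ} {L : ℝ≥0} {t : ℝ}

def moreauEnvelope (t : ℝ) (g : F → ℝ) (x : F) : ℝ :=
  ⨅ y, g y + t / 2 * ‖x - y‖ ^ 2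

-- `L r ≤ t r² / 2 + L² / (2 t)` (AM-GM) applied to `r = ‖x - y‖`.
lemma LipschitzWith.sub_le_add_sq (hg : LipschitzWith L g) (ht : 0 < t) (x y : F) :
    g x - L ^ 2 / (2 * t) ≤ g y + t / 2 * ‖x - y‖ ^ 2 := by
  have hxy : g x - g y ≤ L * ‖x - y‖ := (le_abs_self _).trans (hg.norm_sub_le x y)
  have hamgm : (L : ℝ) * ‖x - y‖ ≤ t / 2 * ‖x - y‖ ^ 2 + L ^ 2 / (2 * t) := by
    rw [← sub_nonneg]
    have e : t / 2 * ‖x - y‖ ^ 2 + L ^ 2 / (2 * t) - L * ‖x - y‖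
        = (t * ‖x - y‖ - L) ^ 2 / (2 * t) := by field_simp; ring
    rw [e]; positivity
  linarith

lemma LipschitzWith.bddBelow_moreauEnvelope (hg : LipschitzWith L g) (ht : 0 < t) (x : F) :
    BddBelow (Set.range fun y => g y + t / 2 * ‖x - y‖ ^ 2) :=
  ⟨_, Set.forall_mem_range.2 (hg.sub_le_add_sq ht x)⟩

lemma LipschitzWith.moreauEnvelope_le_add (hg : LipschitzWith L g) (ht : 0 < t) (x y : F) :
    moreauEnvelope t g x ≤ g y + t / 2 * ‖x - y‖ ^ 2 :=
  ciInf_le (hg.bddBelow_moreauEnvelope ht x) y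

lemma LipschitzWith.moreauEnvelope_le (hg : LipschitzWith L g) (ht : 0 < t) (x : F) :
    moreauEnvelope t g x ≤ g x := by
  simpa using hg.moreauEnvelope_le_add ht x x

lemma LipschitzWith.sub_le_moreauEnvelope (hg : LipschitzWith L g) (ht : 0 < t) (x : F) :
    g x - L ^ 2 / (2 * t) ≤ moreauEnvelope t g x :=
  le_ciInf (hg.sub_le_add_sq ht x)

lemma LipschitzWith.lipschitzWith_moreauEnvelope (hg : LipschitzWith L g) (ht : 0 < t) :
    LipschitzWith L (moreauEnvelope t g) := by
  refine LipschitzWith.of_le_add_mul L fun u v => ?_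
  rw [← sub_le_iff_le_add]
  refine le_ciInf fun y => ?_
  have hshift : moreauEnvelope t g u ≤ g (y + (u - v)) + t / 2 * ‖v - y‖ ^ 2 := by
    simpa [sub_add_eq_sub_sub, sub_sub_cancel_left] using
      hg.moreauEnvelope_le_add ht u (y + (u - v))
  have hg' : g (y + (u - v)) ≤ g y + L * dist u v := by
    simpa [dist_eq_norm] using hg.le_add_mul (y + (u - v)) y
  linarith

variable [InnerProductSpace ℝ F]

-- `t/2 ‖x‖² - moreauEnvelope t g x = ⨆ y, (t ⟪x, y⟫ - t/2 ‖y‖² - g y)` is a supremum of affine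
-- functions of `x`.
lemma LipschitzWith.convexOn_sub_moreauEnvelope (hg : LipschitzWith L g) (ht : 0 < t) :
    ConvexOn ℝ Set.univ fun x => t / 2 * ‖x‖ ^ 2 - moreauEnvelope t g x := by
  have affine : ∀ w y : F, t / 2 * ‖w‖ ^ 2 - (g y + t / 2 * ‖w - y‖ ^ 2)
      = t * ⟪w, y⟫ - t / 2 * ‖y‖ ^ 2 - g y := fun w y => by rw [norm_sub_sq_real]; ring
  have le_sup : ∀ w y : F,
      t * ⟪w, y⟫ - t / 2 * ‖y‖ ^ 2 - g y ≤ t / 2 * ‖w‖ ^ 2 - moreauEnvelope t g w := fun w y => by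
    linarith [affine w y, hg.moreauEnvelope_le_add ht w y]
  refine ⟨convex_univ, fun x _ z _ a b ha hb hab => ?_⟩
  simp only [smul_eq_mul]
  rw [sub_le_comm]
  refine le_ciInf fun y => ?_
  have hcomb : t * ⟪a • x + b • z, y⟫ - t / 2 * ‖y‖ ^ 2 - g y
      = a * (t * ⟪x, y⟫ - t / 2 * ‖y‖ ^ 2 - g y) + b * (t * ⟪z, y⟫ - t / 2 * ‖y‖ ^ 2 - g y) := by
    rw [inner_add_left, real_inner_smul_left, real_inner_smul_left]
    linear_combination (t / 2 * ‖y‖ ^ 2 + g y) * hab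
  linarith [affine (a • x + b • z) y, mul_le_mul_of_nonneg_left (le_sup x y) ha,
    mul_le_mul_of_nonneg_left (le_sup z y) hb]

end MoreauEnvelope

section LipschitzApproximation

variable {F : Type*} [NormedAddCommGroup F] [NormedSpace ℝ F] [HereditarilyLindelofSpace F]

-- The partial maxima of a sequence of affine minorants whose supremum is `φ`.
lemma ConvexOn.exists_lipschitz_tendsto {φ : F → ℝ} (hφ : ConvexOn ℝ Set.univ φ)
    (hφc : LowerSemicontinuous φ) :
    ∃ ψ : ℕ → F → ℝ, (∀ n, ConvexOn ℝ Set.univ (ψ n)) ∧ (∀ n, ∃ K, LipschitzWith K (ψ n)) ∧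
      Monotone ψ ∧ (∀ n, ψ n ≤ φ) ∧ ∀ x, Tendsto (ψ · x) atTop (𝓝 (φ x)) := by
  obtain ⟨l, c, hle, hsup⟩ := hφ.real_univ_sSup_of_nat_affine_eq hφc
  set f : ℕ → F → ℝ := fun i => ⇑(l i) + Function.const F (c i)
  have hsup' : ∀ x, ⨆ i, f i x = φ x := fun x => by simpa using congrFun hsup x
  refine ⟨partialSups f, fun n => ?_, fun n => ?_, (partialSups f).monotone,
    fun n => partialSups_le f n φ fun i _ => hle i, fun x => ?_⟩
  · induction n with
    | zero => exact (l 0).toLinearMap.convexOn convex_univ |>.add_const (c 0)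
    | succ n ih =>
      rw [← Order.succ_eq_add_one, partialSups_succ]
      exact ih.sup ((l _).toLinearMap.convexOn convex_univ |>.add_const _)
  · induction n with
    | zero => exact ⟨_, (l 0).lipschitz.add (LipschitzWith.const (c 0))⟩
    | succ n ih =>
      obtain ⟨K, hK⟩ := ih
      rw [← Order.succ_eq_add_one, partialSups_succ]
      exact ⟨_, hK.max ((l _).lipschitz.add (LipschitzWith.const _))⟩
  refine tendsto_atTop_isLUB (fun m n hmn => (partialSups f).monotone hmn x)
    ⟨Set.forall_mem_range.2 fun n => partialSups_le f n φ (fun i _ => hle i) x, fun b hb => ?_⟩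
  rw [← hsup' x]
  exact ciSup_le fun i => (le_partialSups f i x).trans (hb ⟨i, rfl⟩)

end LipschitzApproximation

section ConvexSets

variable {F : Type*} [NormedAddCommGroup F] [NormedSpace ℝ F]

lemma Convex.convexOn_infDist {C : Set F} (hC : Convex ℝ C) :
    ConvexOn ℝ Set.univ fun x => Metric.infDist x C := by
  rcases C.eq_empty_or_nonempty with rfl | hne
  · simpa using convexOn_const (0 : ℝ) convex_univ
  refine ⟨convex_univ, fun x _ z _ a b ha hb hab => le_of_forall_pos_le_add fun ε hε => ?_⟩
  obtain ⟨p, hp, hxp⟩ := (Metric.infDist_lt_iff hne).1 (lt_add_of_pos_right (Metric.infDist x C) hε)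
  obtain ⟨q, hq, hzq⟩ := (Metric.infDist_lt_iff hne).1 (lt_add_of_pos_right (Metric.infDist z C) hε)
  have hdist : dist (a • x + b • z) (a • p + b • q) ≤ a * dist x p + b * dist z q := by
    have h := norm_add_le (a • (x - p)) (b • (z - q))
    rw [norm_smul, norm_smul, Real.norm_of_nonneg ha, Real.norm_of_nonneg hb, smul_sub, smul_sub,
      sub_add_sub_comm] at h
    simpa only [dist_eq_norm] using h
  calc Metric.infDist (a • x + b • z) C ≤ dist (a • x + b • z) (a • p + b • q) :=
        Metric.infDist_le_dist_of_mem (hC hp hq ha hb hab)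
    _ ≤ a * (Metric.infDist x C + ε) + b * (Metric.infDist z C + ε) := by
        nlinarith [mul_le_mul_of_nonneg_left hxp.le ha, mul_le_mul_of_nonneg_left hzq.le hb]
    _ = a • Metric.infDist x C + b • Metric.infDist z C + ε := by
        simp only [smul_eq_mul]; linear_combination ε * hab

variable [MeasurableSpace F] [BorelSpace F] [SecondCountableTopology F]

-- An open set is a countable union of closed balls it contains, by Lindelöf.
theorem measurableSpace_eq_generateFrom_isClosed_convex :
    ‹MeasurableSpace F› = MeasurableSpace.generateFrom {C : Set F | IsClosed C ∧ Convex ℝ C} := by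
  refine le_antisymm ?_ (MeasurableSpace.generateFrom_le fun C hC => hC.1.measurableSet)
  rw [BorelSpace.measurable_eq (α := F), borel]
  refine MeasurableSpace.generateFrom_le fun U hU => ?_
  have : ∀ x : U, ∃ r > 0, Metric.closedBall (x : F) r ⊆ U := fun x =>
    Metric.nhds_basis_closedBall.mem_iff.1 (hU.mem_nhds x.2)
  choose r hr hrU using this
  obtain ⟨T, hT, hTU⟩ := TopologicalSpace.isOpen_iUnion_countable
    (fun x : U => Metric.ball (x : F) (r x)) fun _ => Metric.isOpen_ball
  have hU_eq : U = ⋃ x ∈ T, Metric.closedBall (x : F) (r x) := by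
    refine subset_antisymm (fun y hy => ?_) (Set.iUnion₂_subset fun x _ => hrU x)
    have hy' : y ∈ ⋃ x : U, Metric.ball (x : F) (r x) :=
      Set.mem_iUnion.2 ⟨⟨y, hy⟩, Metric.mem_ball_self (hr _)⟩
    rw [← hTU] at hy'
    exact Set.biUnion_mono le_rfl (fun x _ => Metric.ball_subset_closedBall) hy'
  rw [hU_eq]
  exact .biUnion hT fun x _ => MeasurableSpace.measurableSet_generateFrom
    ⟨Metric.isClosed_closedBall, convex_closedBall _ _⟩

end ConvexSets

section Ext

lemma tendsto_integral_min_one_mul_infDist {X : Type*} [PseudoMetricSpace X] [MeasurableSpace X]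
    [OpensMeasurableSpace X] (κ : Measure X) [IsFiniteMeasure κ] {C : Set X}
    (hCc : IsClosed C) (hne : C.Nonempty) :
    Tendsto (fun n : ℕ => ∫ x, min 1 ((n : ℝ) * Metric.infDist x C) ∂κ) atTop (𝓝 (κ.real Cᶜ)) := by
  rw [← integral_indicator_one hCc.measurableSet.compl]
  refine tendsto_integral_of_dominated_convergence (fun _ => 1)
    (fun n => (continuous_const.min (continuous_const.mul
      (Metric.continuous_infDist_pt C))).aestronglyMeasurable)
    (integrable_const 1) (fun n => ae_of_all _ fun x => ?_) (ae_of_all _ fun x => ?_)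
  · rw [Real.norm_of_nonneg (le_min zero_le_one (mul_nonneg n.cast_nonneg Metric.infDist_nonneg))]
    exact min_le_left _ _
  by_cases hx : x ∈ C
  · simp [Metric.infDist_zero_of_mem hx, hx]
  · have hpos : 0 < Metric.infDist x C := (hCc.notMem_iff_infDist_pos hne).1 hx
    simp only [Set.indicator_of_mem (Set.mem_compl hx), Pi.one_apply]
    refine tendsto_const_nhds.congr' ?_
    filter_upwards [tendsto_natCast_atTop_atTop.eventually_ge_atTop (Metric.infDist x C)⁻¹]
      with n hn
    rw [min_eq_left]
    rwa [inv_le_iff_one_le_mul₀ hpos] at hn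

variable {F : Type*} [NormedAddCommGroup F] [NormedSpace ℝ F] [MeasurableSpace F] [BorelSpace F]
  [SecondCountableTopology F]

-- `min 1 (n d_C) = n d_C - max (n d_C - 1) 0` is a difference of convex Lipschitz functions, and it
-- tends to the indicator of `Cᶜ`; closed convex sets form a generating π-system.
theorem MeasureTheory.Measure.ext_of_forall_integral_convexOn_lipschitz_eq {ν ρ : Measure F}
    [IsFiniteMeasure ν] [IsFiniteMeasure ρ] (hν : Integrable (‖·‖) ν) (hρ : Integrable (‖·‖) ρ)
    (h : ∀ g : F → ℝ, ConvexOn ℝ Set.univ g → (∃ K, LipschitzWith K g) →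
      ∫ x, g x ∂ν = ∫ x, g x ∂ρ) :
    ν = ρ := by
  have huniv : ν.real Set.univ = ρ.real Set.univ := by
    simpa using h (fun _ => 1) (convexOn_const 1 convex_univ) ⟨0, LipschitzWith.const 1⟩
  have hreal : ∀ s, ν.real s = ρ.real s → ν s = ρ s := fun s hs =>
    (ENNReal.toReal_eq_toReal_iff' (measure_ne_top ν s) (measure_ne_top ρ s)).1 hs
  refine ext_of_generate_finite _ measurableSpace_eq_generateFrom_isClosed_convex
    (fun C hC D hD _ => ⟨hC.1.inter hD.1, hC.2.inter hD.2⟩) (fun C ⟨hCc, hCv⟩ => hreal _ ?_)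
    (hreal _ huniv)
  rcases C.eq_empty_or_nonempty with rfl | hne
  · simp
  set d : ℕ → F → ℝ := fun n x => (n : ℝ) • Metric.infDist x C
  have hd_conv : ∀ n, ConvexOn ℝ Set.univ (d n) := fun n => hCv.convexOn_infDist.smul n.cast_nonneg
  have hd_lip : ∀ n : ℕ, LipschitzWith ‖(n : ℝ)‖₊ (d n) := fun n =>
    ((lipschitzWith_smul (n : ℝ)).comp (Metric.lipschitz_infDist_pt C)).weaken (by simp)
  have hmin : ∀ n : ℕ, ∫ x, min 1 ((n : ℝ) * Metric.infDist x C) ∂ν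
      = ∫ x, min 1 ((n : ℝ) * Metric.infDist x C) ∂ρ := fun n => by
    have hsplit : ∀ x, min 1 ((n : ℝ) * Metric.infDist x C) = d n x - max (d n x - 1) 0 :=
      fun x => by
        simp only [d, smul_eq_mul]
        rcases le_total ((n : ℝ) * Metric.infDist x C) 1 with h | h <;> simp [h]
    have hc_conv : ConvexOn ℝ Set.univ fun x => max (d n x - 1) 0 :=
      ((hd_conv n).add_const (-1)).sup (convexOn_const 0 convex_univ)
    have hc_lip : LipschitzWith ‖(n : ℝ)‖₊ fun x => max (d n x - 1) 0 :=
      (((hd_lip n).sub (LipschitzWith.const 1)).max_const 0).weaken (by simp)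
    simp only [hsplit]
    rw [integral_sub ((hd_lip n).integrable_of_integrable_norm hν)
        (hc_lip.integrable_of_integrable_norm hν),
      integral_sub ((hd_lip n).integrable_of_integrable_norm hρ)
        (hc_lip.integrable_of_integrable_norm hρ),
      h _ (hd_conv n) ⟨_, hd_lip n⟩, h _ hc_conv ⟨_, hc_lip⟩]
  have hcompl : ν.real Cᶜ = ρ.real Cᶜ := tendsto_nhds_unique
    (tendsto_integral_min_one_mul_infDist ν hCc hne)
    ((tendsto_integral_min_one_mul_infDist ρ hCc hne).congr fun n => (hmin n).symm)
  rw [measureReal_compl hCc.measurableSet, measureReal_compl hCc.measurableSet, huniv] at hcompl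
  linarith

end Ext

section LipschitzTestFunctions

variable {F : Type*} [NormedAddCommGroup F] [NormedSpace ℝ F] [HereditarilyLindelofSpace F]
  [MeasurableSpace F] [OpensMeasurableSpace F] {μ ν : Measure F} [IsFiniteMeasure μ]
  [IsFiniteMeasure ν]

theorem integral_le_of_forall_convexOn_lipschitz (hμ : Integrable (‖·‖) μ)
    (hν : Integrable (‖·‖) ν)
    (h : ∀ g : F → ℝ, ConvexOn ℝ Set.univ g → (∃ K, LipschitzWith K g) →
      ∫ x, g x ∂μ ≤ ∫ x, g x ∂ν)
    {φ : F → ℝ} (hφ : ConvexOn ℝ Set.univ φ) (hφc : LowerSemicontinuous φ) (hφμ : Integrable φ μ)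
    (hφν : Integrable φ ν) :
    ∫ x, φ x ∂μ ≤ ∫ x, φ x ∂ν := by
  obtain ⟨ψ, hconv, hlip, hmono, hle, hlim⟩ := hφ.exists_lipschitz_tendsto hφc
  obtain ⟨K, hK⟩ := hlip 0
  have hbound : ∀ n x, ‖ψ n x‖ ≤ |φ x| + |ψ 0 x| := fun n x => by
    rw [Real.norm_eq_abs, abs_le]
    constructor <;> linarith [hmono (Nat.zero_le n) x, hle n x, le_abs_self (φ x),
      neg_abs_le (ψ 0 x), abs_nonneg (φ x), abs_nonneg (ψ 0 x)]
  have htendsto : ∀ (κ : Measure F) [IsFiniteMeasure κ], Integrable (‖·‖) κ → Integrable φ κ →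
      Tendsto (fun n => ∫ x, ψ n x ∂κ) atTop (𝓝 (∫ x, φ x ∂κ)) := fun κ _ hκ hφκ =>
    tendsto_integral_of_dominated_convergence (fun x => |φ x| + |ψ 0 x|)
      (fun n => (hlip n).choose_spec.continuous.aestronglyMeasurable)
      (hφκ.abs.add (hK.integrable_of_integrable_norm hκ).abs)
      (fun n => ae_of_all _ (hbound n)) (ae_of_all _ hlim)
  exact le_of_tendsto_of_tendsto' (htendsto μ hμ hφμ) (htendsto ν hν hφν)
    fun n => h _ (hconv n) (hlip n)

end LipschitzTestFunctions

section ConvexOrder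

variable {d : ℕ}

local notation "E" => EuclideanSpace ℝ (Fin d)

lemma convexOrderLE_refl (μ : Measure E) : ConvexOrderLE μ μ :=
  fun _ _ _ _ => le_rfl

lemma ConvexOrderLE.of_forall_convexOn_lipschitz {μ ν : Measure E} [IsFiniteMeasure μ]
    [IsFiniteMeasure ν] (hμ : Integrable (‖·‖) μ) (hν : Integrable (‖·‖) ν)
    (h : ∀ g : E → ℝ, ConvexOn ℝ Set.univ g → (∃ K, LipschitzWith K g) →
      ∫ x, g x ∂μ ≤ ∫ x, g x ∂ν) :
    ConvexOrderLE μ ν := fun _ hφ hφμ hφν =>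
  integral_le_of_forall_convexOn_lipschitz hμ hν h hφ
    (continuousOn_univ.1 (hφ.continuousOn isOpen_univ)).lowerSemicontinuous hφμ hφν

lemma ConvexOrderLE.m2_le {ν ρ : Measure E} (h : ConvexOrderLE ν ρ)
    (hν2 : Integrable (fun x : E => ‖x‖ ^ 2) ν) (hρ2 : Integrable (fun x : E => ‖x‖ ^ 2) ρ) :
    m2 ν ≤ m2 ρ :=
  h _ (convexOn_univ_norm.pow (fun _ _ => norm_nonneg _) 2) hν2 hρ2

lemma ConvexOrderLE.integral_le_add_of_lipschitz {ν ρ : Measure E} [IsProbabilityMeasure ν]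
    [IsProbabilityMeasure ρ] (h : ConvexOrderLE ν ρ) (hν2 : Integrable (fun x : E => ‖x‖ ^ 2) ν)
    (hρ2 : Integrable (fun x : E => ‖x‖ ^ 2) ρ) {g : E → ℝ} {L : ℝ≥0} (hg : LipschitzWith L g)
    {t : ℝ} (ht : 0 < t) :
    ∫ x, g x ∂ρ ≤ ∫ x, g x ∂ν + t / 2 * (m2 ρ - m2 ν) + L ^ 2 / (2 * t) := by
  have hν1 := integrable_norm_of_integrable_norm_sq hν2
  have hρ1 := integrable_norm_of_integrable_norm_sq hρ2
  have heν := (hg.lipschitzWith_moreauEnvelope ht).integrable_of_integrable_norm hν1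
  have heρ := (hg.lipschitzWith_moreauEnvelope ht).integrable_of_integrable_norm hρ1
  have hgρ := hg.integrable_of_integrable_norm hρ1
  have htest := h _ (hg.convexOn_sub_moreauEnvelope ht) ((hν2.const_mul _).sub heν)
    ((hρ2.const_mul _).sub heρ)
  rw [integral_sub (hν2.const_mul _) heν, integral_sub (hρ2.const_mul _) heρ,
    integral_const_mul, integral_const_mul] at htest
  have hρ_env : ∫ x, g x ∂ρ ≤ ∫ x, moreauEnvelope t g x ∂ρ + L ^ 2 / (2 * t) :=
    calc ∫ x, g x ∂ρ ≤ ∫ x, (moreauEnvelope t g x + L ^ 2 / (2 * t)) ∂ρ :=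
          integral_mono hgρ (heρ.add (integrable_const _))
            fun x => sub_le_iff_le_add.1 (hg.sub_le_moreauEnvelope ht x)
      _ = _ := by
        rw [integral_add heρ (integrable_const _), integral_const, probReal_univ, one_smul]
  have hν_env : ∫ x, moreauEnvelope t g x ∂ν ≤ ∫ x, g x ∂ν :=
    integral_mono heν (hg.integrable_of_integrable_norm hν1) (hg.moreauEnvelope_le ht)
  unfold m2
  linarith

lemma le_integral_of_forall_exists_dominant {ν : Measure E} [IsProbabilityMeasure ν]
    (hν2 : Integrable (fun x : E => ‖x‖ ^ 2) ν) {g : E → ℝ} {L : ℝ≥0} (hg : LipschitzWith L g)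
    {a : ℝ} (h : ∀ ε > 0, ∃ ρ : Measure E, IsProbabilityMeasure ρ ∧
      Integrable (fun x : E => ‖x‖ ^ 2) ρ ∧ ConvexOrderLE ν ρ ∧ m2 ρ ≤ m2 ν + ε ∧
      a ≤ ∫ x, g x ∂ρ) :
    a ≤ ∫ x, g x ∂ν := by
  refine le_of_forall_pos_le_add fun δ hδ => ?_
  set t : ℝ := L ^ 2 / δ + 1
  have ht : 0 < t := by positivity
  obtain ⟨ρ, hρ, hρ2, hνρ, hm2, hle⟩ := h (δ / t) (by positivity)
  have hbound := hνρ.integral_le_add_of_lipschitz hν2 hρ2 hg ht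
  have hm2_term : t / 2 * (m2 ρ - m2 ν) ≤ δ / 2 := by
    calc t / 2 * (m2 ρ - m2 ν) ≤ t / 2 * (δ / t) := by gcongr; linarith
      _ = δ / 2 := by field_simp
  have hL_term : (L : ℝ) ^ 2 / (2 * t) ≤ δ / 2 := by
    have : δ * t = L ^ 2 + δ := by simp only [t]; field_simp
    rw [div_le_iff₀ (by positivity)]
    nlinarith
  linarith

-- Jensen's inequality on the fibres `x + μ₂ - b`, which have barycentre `x`.
lemma convexOrderLE_map_add_sub {μ₁ μ₂ : Measure E} [IsProbabilityMeasure μ₁]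
    [IsProbabilityMeasure μ₂] (h₂ : Integrable (fun y => y) μ₂) {b : E} (hb : ∫ y, y ∂μ₂ = b) :
    ConvexOrderLE μ₁ ((μ₁.prod μ₂).map fun p => p.1 + p.2 - b) := by
  intro φ hφ hφ₁ hφρ
  have hT : Measurable fun p : E × E => p.1 + p.2 - b := by fun_prop
  have hφc : Continuous φ := continuousOn_univ.1 (hφ.continuousOn isOpen_univ)
  have hcomp : Integrable (fun p : E × E => φ (p.1 + p.2 - b)) (μ₁.prod μ₂) :=
    (integrable_map_measure hφc.aestronglyMeasurable hT.aemeasurable).1 hφρ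
  rw [integral_map hT.aemeasurable hφc.aestronglyMeasurable, integral_prod _ hcomp]
  refine integral_mono_ae hφ₁ hcomp.integral_prod_left ?_
  filter_upwards [hcomp.prod_right_ae] with x hx
  have hshift : (fun y => x + y - b) = fun y => (x - b) + y := by ext1 y; abel
  have hfibre : Integrable (fun y => x + y - b) μ₂ := hshift ▸ (integrable_const (x - b)).add h₂
  have hmean : ∫ y, (x + y - b) ∂μ₂ = x := by
    rw [hshift, integral_add (integrable_const _) h₂, hb, integral_const, probReal_univ, one_smul,
      sub_add_cancel]
  simpa only [hmean] using
    hφ.map_integral_le hφc.continuousOn isClosed_univ (ae_of_all _ fun _ => trivial) hfibre hx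

lemma exists_common_dominant {μ ν : Measure E} [IsProbabilityMeasure μ] [IsProbabilityMeasure ν]
    (hμ2 : Integrable (fun x : E => ‖x‖ ^ 2) μ) (hν2 : Integrable (fun x : E => ‖x‖ ^ 2) ν)
    {b : E} (hμb : bary μ = b) (hνb : bary ν = b) :
    ∃ ρ : Measure E, IsProbabilityMeasure ρ ∧ Integrable (fun x : E => ‖x‖ ^ 2) ρ ∧
      ConvexOrderLE μ ρ ∧ ConvexOrderLE ν ρ := by
  have hT : Measurable fun p : E × E => p.1 + p.2 - b := by fun_prop
  have hswap : (ν.prod μ).map (fun p : E × E => p.1 + p.2 - b)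
      = (μ.prod ν).map fun p => p.1 + p.2 - b := by
    rw [← Measure.prod_swap, Measure.map_map hT measurable_swap]
    congr 1
    ext p : 1
    simp [add_comm]
  have hμ1 := (memLp_two_iff_integrable_sq_norm aestronglyMeasurable_id).2 hμ2
  have hν1 := (memLp_two_iff_integrable_sq_norm aestronglyMeasurable_id).2 hν2
  refine ⟨_, Measure.isProbabilityMeasure_map hT.aemeasurable, ?_,
    convexOrderLE_map_add_sub (hν1.integrable one_le_two) hνb, ?_⟩
  · have hmem : MemLp (fun p : E × E => p.1 + p.2 - b) 2 (μ.prod ν) :=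
      ((hμ1.comp_fst ν).add (hν1.comp_snd μ)).sub (memLp_const b)
    rw [integrable_map_measure (g := fun x : E => ‖x‖ ^ 2)
      (continuous_norm.pow 2).aestronglyMeasurable hT.aemeasurable]
    exact (memLp_two_iff_integrable_sq_norm hmem.1).1 hmem
  · rw [← hswap]
    exact convexOrderLE_map_add_sub (hμ1.integrable one_le_two) hμb

lemma Cmin_eq_m2_of_convexOrderLE {μ ν : Measure E} [IsProbabilityMeasure ν]
    (hν2 : Integrable (fun x : E => ‖x‖ ^ 2) ν) (h : ConvexOrderLE μ ν) : Cmin μ ν = m2 ν :=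
  IsLeast.csInf_eq ⟨⟨ν, inferInstance, hν2, h, convexOrderLE_refl ν, rfl⟩,
    by rintro _ ⟨ρ, -, hρ2, -, hνρ, rfl⟩; exact hνρ.m2_le hν2 hρ2⟩

lemma exists_dominant_m2_lt_of_Cmin_eq {μ ν : Measure E} [IsProbabilityMeasure μ]
    [IsProbabilityMeasure ν] (hμ2 : Integrable (fun x : E => ‖x‖ ^ 2) μ)
    (hν2 : Integrable (fun x : E => ‖x‖ ^ 2) ν) {b : E} (hμb : bary μ = b) (hνb : bary ν = b)
    (hC : Cmin μ ν = m2 ν) {ε : ℝ} (hε : 0 < ε) :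
    ∃ ρ : Measure E, IsProbabilityMeasure ρ ∧ Integrable (fun x : E => ‖x‖ ^ 2) ρ ∧
      ConvexOrderLE μ ρ ∧ ConvexOrderLE ν ρ ∧ m2 ρ < m2 ν + ε := by
  obtain ⟨ρ₀, hρ₀, hρ₀2, hμρ₀, hνρ₀⟩ := exists_common_dominant hμ2 hν2 hμb hνb
  have hCε : Cmin μ ν < m2 ν + ε := by linarith
  obtain ⟨_, ⟨ρ, hρ, hρ2, hμρ, hνρ, rfl⟩, hlt⟩ :=
    exists_lt_of_csInf_lt (by exact ⟨_, ρ₀, hρ₀, hρ₀2, hμρ₀, hνρ₀, rfl⟩) hCε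
  exact ⟨ρ, hρ, hρ2, hμρ, hνρ, hlt⟩

lemma convexOrderLE_of_Cmin_eq {μ ν : Measure E} [IsProbabilityMeasure μ]
    [IsProbabilityMeasure ν] (hμ2 : Integrable (fun x : E => ‖x‖ ^ 2) μ)
    (hν2 : Integrable (fun x : E => ‖x‖ ^ 2) ν) {b : E} (hμb : bary μ = b) (hνb : bary ν = b)
    (hC : Cmin μ ν = m2 ν) : ConvexOrderLE μ ν := by
  refine .of_forall_convexOn_lipschitz (integrable_norm_of_integrable_norm_sq hμ2)
    (integrable_norm_of_integrable_norm_sq hν2) fun g hg ⟨L, hgL⟩ =>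
      le_integral_of_forall_exists_dominant hν2 hgL fun ε hε => ?_
  obtain ⟨ρ, hρ, hρ2, hμρ, hνρ, hm2⟩ := exists_dominant_m2_lt_of_Cmin_eq hμ2 hν2 hμb hνb hC hε
  exact ⟨ρ, hρ, hρ2, hνρ, hm2.le, hμρ g hg
    (hgL.integrable_of_integrable_norm (integrable_norm_of_integrable_norm_sq hμ2))
    (hgL.integrable_of_integrable_norm (integrable_norm_of_integrable_norm_sq hρ2))⟩

lemma ConvexOrderLE.eq_of_m2_eq {ν ρ : Measure E} [IsProbabilityMeasure ν]
    [IsProbabilityMeasure ρ] (h : ConvexOrderLE ν ρ) (hν2 : Integrable (fun x : E => ‖x‖ ^ 2) ν)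
    (hρ2 : Integrable (fun x : E => ‖x‖ ^ 2) ρ) (hm2 : m2 ρ = m2 ν) : ρ = ν := by
  have hν1 := integrable_norm_of_integrable_norm_sq hν2
  have hρ1 := integrable_norm_of_integrable_norm_sq hρ2
  refine Measure.ext_of_forall_integral_convexOn_lipschitz_eq hρ1 hν1 fun g hg ⟨L, hgL⟩ =>
    le_antisymm (le_integral_of_forall_exists_dominant hν2 hgL fun ε hε =>
      ⟨ρ, inferInstance, hρ2, h, by linarith, le_rfl⟩) ?_
  exact h g hg (hgL.integrable_of_integrable_norm hν1) (hgL.integrable_of_integrable_norm hρ1)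

end ConvexOrder

theorem stmt_14
    {d : ℕ} (b : EuclideanSpace ℝ (Fin d)) (μ ν : Measure (EuclideanSpace ℝ (Fin d)))
    [IsProbabilityMeasure μ] [IsProbabilityMeasure ν]
    (hμ2 : Integrable (fun x => ‖x‖ ^ 2) μ) (hν2 : Integrable (fun x => ‖x‖ ^ 2) ν)
    (hμb : bary μ = b) (hνb : bary ν = b) :
    (ConvexOrderLE μ ν ↔ Cmin μ ν = m2 ν) ∧
    (ConvexOrderLE μ ν →
      ∀ ρ : Measure (EuclideanSpace ℝ (Fin d)), IsProbabilityMeasure ρ →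
        Integrable (fun x => ‖x‖ ^ 2) ρ → ConvexOrderLE μ ρ → ConvexOrderLE ν ρ →
        m2 ρ = Cmin μ ν → ρ = ν) :=
  ⟨⟨Cmin_eq_m2_of_convexOrderLE hν2, convexOrderLE_of_Cmin_eq hμ2 hν2 hμb hνb⟩,
    fun h _ _ hρ2 _ hνρ hm2 =>
      hνρ.eq_of_m2_eq hν2 hρ2 (hm2.trans (Cmin_eq_m2_of_convexOrderLE hν2 h))⟩

end
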